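/- (Differentiation formula, first derivative.) Let F : ℝ² → ℝ^{12×16} be the matrix-valued map F(x) = R1(β(x))·R2(β(x))·R3(β(x)) (each entry of F is a polynomial function of x). Then for every x ∈ ℝ² and every u ∈ ℝ² with directional coordinates α, the directional derivative of F at x in direction u equals 3·R1(β(x))·R2(β(x))·U3(α), where U3(α) is the constant matrix obtained from R3(β) by replacing each βj by αj, each β_{i,j} by αi − αj, each γj by 2αj, and each σ_{i,j} by αi + αj. -/

import Mathlib

/-!
Along the line `t ↦ x + t u` the barycentric coordinates move affinely,
`β(x + t u) = β(x) + t α`, and each `Rₖ` is jointly linear in `(β, 1)`, so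
`Rₖ(β + t α) = Rₖ(β) + t Uₖ(α)`. The product rule gives the derivative
`U1 R2 R3 + R1 U2 R3 + R1 R2 U3`, and the commutation relations `U1(α) R2(β) = R1(β) U2(α)` and
`U2(α) R3(β) = R2(β) U3(α)` (for `Σ β = 1`, `Σ α = 0`) turn each term into `R1 R2 U3`.
-/

/-- The 12×10 recursion matrix `R1` (with `γj = 2 βj − c`; the paper's `R1` is `c = 1`,
the derivative matrix `U1` is `c = 0`). -/
noncomputable def R1g (b1 b2 b3 c : ℝ) : Matrix (Fin 12) (Fin 10) ℝ :=
  !![2*b1 - c, 0, 0, 0, 0, 2*(b3 - b2), 4*b2, 0, 0, 0;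
     2*b1 - c, 0, 0, 2*(b2 - b3), 0, 0, 4*b3, 0, 0, 0;
     0, 2*b2 - c, 0, 2*(b1 - b3), 0, 0, 0, 4*b3, 0, 0;
     0, 2*b2 - c, 0, 0, 2*(b3 - b1), 0, 0, 4*b1, 0, 0;
     0, 0, 2*b3 - c, 0, 2*(b2 - b1), 0, 0, 0, 4*b1, 0;
     0, 0, 2*b3 - c, 0, 0, 2*(b1 - b2), 0, 0, 4*b2, 0;
     0, 0, 0, 0, 0, 2*(b3 - b2), 4*(b1 - b3), 0, 0, -3*(2*b1 - c);
     0, 0, 0, 2*(b2 - b3), 0, 0, 4*(b1 - b2), 0, 0, -3*(2*b1 - c);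
     0, 0, 0, 2*(b1 - b3), 0, 0, 0, 4*(b2 - b1), 0, -3*(2*b2 - c);
     0, 0, 0, 0, 2*(b3 - b1), 0, 0, 4*(b2 - b3), 0, -3*(2*b2 - c);
     0, 0, 0, 0, 2*(b2 - b1), 0, 0, 0, 4*(b3 - b2), -3*(2*b3 - c);
     0, 0, 0, 0, 0, 2*(b1 - b2), 0, 0, 4*(b3 - b1), -3*(2*b3 - c)]

/-- The 10×12 recursion matrix `R2` (with `γj = 2 βj − c`). -/
noncomputable def R2g (b1 b2 b3 c : ℝ) : Matrix (Fin 10) (Fin 12) ℝ :=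
  !![2*b1 - c, 2*b2, 0, 0, 0, 0, 0, 0, 0, 0, 0, 2*b3;
     0, 0, 0, 2*b1, 2*b2 - c, 2*b3, 0, 0, 0, 0, 0, 0;
     0, 0, 0, 0, 0, 0, 0, 2*b2, 2*b3 - c, 2*b1, 0, 0;
     0, b1 - b3, 3*b3, b2 - b3, 0, 0, 0, 0, 0, 0, 0, 0;
     0, 0, 0, 0, 0, b2 - b1, 3*b1, b3 - b1, 0, 0, 0, 0;
     0, 0, 0, 0, 0, 0, 0, 0, 0, b3 - b2, 3*b2, b1 - b2;
     0, (b1 - b3)/2, 3*b2/2, 0, 0, 0, 0, 0, 0, 0, 3*b3/2, (b1 - b2)/2;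
     0, 0, 3*b1/2, (b2 - b3)/2, 0, (b2 - b1)/2, 3*b3/2, 0, 0, 0, 0, 0;
     0, 0, 0, 0, 0, 0, 3*b2/2, (b3 - b1)/2, 0, (b3 - b2)/2, 3*b1/2, 0;
     0, 0, -(2*b3 - c), 0, 0, 0, -(2*b1 - c), 0, 0, 0, -(2*b2 - c), 0]

/-- The 12×16 recursion matrix `R3` (with `γj = 2 βj − c`). -/
noncomputable def R3g (b1 b2 b3 c : ℝ) : Matrix (Fin 12) (Fin 16) ℝ :=
  !![2*b1 - c, 2*b2, 0, 0, 0, 0, 0, 0, 0, 0, 0, 2*b3, 0, 0, 0, 0;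
     0, b1 - b3, b2, 0, 0, 0, 0, 0, 0, 0, 0, 0, 2*b3, 0, 0, 0;
     0, 0, (b1 + b2)/3, 0, 0, 0, b3/3, 0, 0, 0, b3/3, 0, 2*b1/3, 2*b2/3, 0, b3/3;
     0, 0, b1, b2 - b3, 0, 0, 0, 0, 0, 0, 0, 0, 0, 2*b3, 0, 0;
     0, 0, 0, 2*b1, 2*b2 - c, 2*b3, 0, 0, 0, 0, 0, 0, 0, 0, 0, 0;
     0, 0, 0, 0, 0, b2 - b1, b3, 0, 0, 0, 0, 0, 0, 2*b1, 0, 0;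
     0, 0, b1/3, 0, 0, 0, (b2 + b3)/3, 0, 0, 0, b1/3, 0, 0, 2*b2/3, 2*b3/3, b1/3;
     0, 0, 0, 0, 0, 0, b2, b3 - b1, 0, 0, 0, 0, 0, 0, 2*b1, 0;
     0, 0, 0, 0, 0, 0, 0, 2*b2, 2*b3 - c, 2*b1, 0, 0, 0, 0, 0, 0;
     0, 0, 0, 0, 0, 0, 0, 0, 0, b3 - b2, b1, 0, 0, 0, 2*b2, 0;
     0, 0, b2/3, 0, 0, 0, b2/3, 0, 0, 0, (b1 + b3)/3, 0, 2*b1/3, 0, 2*b3/3, b2/3;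
     0, 0, 0, 0, 0, 0, 0, 0, 0, 0, b3, b1 - b2, 2*b2, 0, 0, 0]

/-- The recursion matrix `R1(β)`. -/
noncomputable def R1 (b1 b2 b3 : ℝ) : Matrix (Fin 12) (Fin 10) ℝ := R1g b1 b2 b3 1
/-- The recursion matrix `R2(β)`. -/
noncomputable def R2 (b1 b2 b3 : ℝ) : Matrix (Fin 10) (Fin 12) ℝ := R2g b1 b2 b3 1
/-- The recursion matrix `R3(β)`. -/
noncomputable def R3 (b1 b2 b3 : ℝ) : Matrix (Fin 12) (Fin 16) ℝ := R3g b1 b2 b3 1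

/-- `U1(α)`: `R1` with `βj ↦ αj`, `β_{i,j} ↦ αi − αj`, `γj ↦ 2αj`, `σ_{i,j} ↦ αi + αj`. -/
noncomputable def U1 (a1 a2 a3 : ℝ) : Matrix (Fin 12) (Fin 10) ℝ := R1g a1 a2 a3 0
/-- `U2(α)`: `R2` with `βj ↦ αj`, `β_{i,j} ↦ αi − αj`, `γj ↦ 2αj`, `σ_{i,j} ↦ αi + αj`. -/
noncomputable def U2 (a1 a2 a3 : ℝ) : Matrix (Fin 10) (Fin 12) ℝ := R2g a1 a2 a3 0
/-- `U3(α)`: `R3` with `βj ↦ αj`, `β_{i,j} ↦ αi − αj`, `γj ↦ 2αj`, `σ_{i,j} ↦ αi + αj`. -/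
noncomputable def U3 (a1 a2 a3 : ℝ) : Matrix (Fin 12) (Fin 16) ℝ := R3g a1 a2 a3 0

section Barycentric

variable {ι E : Type*} [Fintype ι] [NormedAddCommGroup E] [NormedSpace ℝ E]
  {p : ι → E} {bary : E → ι → ℝ}

def IsBarycentricCoords (p : ι → E) (bary : E → ι → ℝ) : Prop :=
  ∀ z, ∑ i, bary z i = 1 ∧ z = ∑ i, bary z i • p i

namespace IsBarycentricCoords

theorem affineSpan_eq_top (hbary : IsBarycentricCoords p bary) :
    affineSpan ℝ (Set.range p) = ⊤ := by
  refine eq_top_iff.2 fun z _ => ?_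
  obtain ⟨hsum, hz⟩ := hbary z
  rw [hz, ← Finset.univ.affineCombination_eq_linear_combination p _ hsum]
  exact affineCombination_mem_affineSpan hsum p

noncomputable def affineBasis (hbary : IsBarycentricCoords p bary)
    (hind : AffineIndependent ℝ p) : AffineBasis ι ℝ E :=
  ⟨p, hind, hbary.affineSpan_eq_top⟩

theorem eq_coord (hbary : IsBarycentricCoords p bary) (hind : AffineIndependent ℝ p)
    (z : E) (i : ι) : bary z i = (hbary.affineBasis hind).coord i z := by
  obtain ⟨hsum, hz⟩ := hbary z
  conv_rhs => rw [hz, ← Finset.univ.affineCombination_eq_linear_combination p _ hsum]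
  exact ((hbary.affineBasis hind).coord_apply_combination_of_mem (Finset.mem_univ i) hsum).symm

theorem sum_smul (hbary : IsBarycentricCoords p bary) (hind : AffineIndependent ℝ p)
    {w : ι → ℝ} (hw : ∑ i, w i = 1) : bary (∑ i, w i • p i) = w := by
  funext i
  rw [hbary.eq_coord hind, ← Finset.univ.affineCombination_eq_linear_combination p _ hw]
  exact (hbary.affineBasis hind).coord_apply_combination_of_mem (Finset.mem_univ i) hw

theorem add_smul (hbary : IsBarycentricCoords p bary) (hind : AffineIndependent ℝ p)
    {a : ι → ℝ} (ha : ∑ i, a i = 0) (x : E) (t : ℝ) :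
    bary (x + t • ∑ i, a i • p i) = bary x + t • a := by
  obtain ⟨hsum, hx⟩ := hbary x
  have hw : ∑ i, (bary x + t • a) i = 1 := by
    simp [Finset.sum_add_distrib, ← Finset.mul_sum, hsum, ha]
  conv_lhs => rw [hx]
  rw [← hbary.sum_smul hind hw]
  simp only [Pi.add_apply, Pi.smul_apply, _root_.add_smul, Finset.sum_add_distrib,
    Finset.smul_sum, smul_smul, smul_eq_mul]

theorem differentiable [FiniteDimensional ℝ E] (hbary : IsBarycentricCoords p bary)
    (hind : AffineIndependent ℝ p) (i : ι) : Differentiable ℝ (fun z => bary z i) := by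
  simp_rw [hbary.eq_coord hind]
  exact (smooth_barycentric_coord _ i).differentiable (by simp)

end IsBarycentricCoords

end Barycentric

section MatrixCalculus

variable {l m n o : Type*}

theorem HasDerivAt.matrix_mul_apply [Fintype m] {A : ℝ → Matrix l m ℝ}
    {B : ℝ → Matrix m n ℝ} {A' : Matrix l m ℝ} {B' : Matrix m n ℝ} {t : ℝ}
    (hA : ∀ i k, HasDerivAt (fun s => A s i k) (A' i k) t)
    (hB : ∀ k j, HasDerivAt (fun s => B s k j) (B' k j) t) (i : l) (j : n) :
    HasDerivAt (fun s => (A s * B s) i j) ((A' * B t + A t * B') i j) t := by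
  simp only [Matrix.mul_apply, Matrix.add_apply, ← Finset.sum_add_distrib]
  exact HasDerivAt.fun_sum fun k _ => (hA i k).mul (hB k j)

theorem hasDerivAt_add_smul_apply (A A' : Matrix m n ℝ) (t : ℝ) (i : m) (j : n) :
    HasDerivAt (fun s : ℝ => (A + s • A') i j) (A' i j) t := by
  simpa using ((hasDerivAt_id t).mul_const (A' i j)).const_add (A i j)

theorem hasDerivAt_add_smul_mul_add_smul_mul_add_smul_apply [Fintype m] [Fintype n]
    (A A' : Matrix l m ℝ) (B B' : Matrix m n ℝ) (C C' : Matrix n o ℝ) (i : l) (j : o) :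
    HasDerivAt (fun s : ℝ => ((A + s • A') * (B + s • B') * (C + s • C')) i j)
      ((A' * B * C + A * B' * C + A * B * C') i j) 0 := by
  have h := HasDerivAt.matrix_mul_apply
    (HasDerivAt.matrix_mul_apply (hasDerivAt_add_smul_apply A A' 0)
      (hasDerivAt_add_smul_apply B B' 0)) (hasDerivAt_add_smul_apply C C' 0) i j
  simpa [Matrix.add_mul] using h

theorem DifferentiableAt.matrix_mul_apply [Fintype m] {E : Type*} [NormedAddCommGroup E]
    [NormedSpace ℝ E] {A : E → Matrix l m ℝ} {B : E → Matrix m n ℝ} {x : E}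
    (hA : ∀ i k, DifferentiableAt ℝ (fun z => A z i k) x)
    (hB : ∀ k j, DifferentiableAt ℝ (fun z => B z k j) x) (i : l) (j : n) :
    DifferentiableAt ℝ (fun z => (A z * B z) i j) x := by
  simp only [Matrix.mul_apply]
  exact DifferentiableAt.fun_sum fun k _ => (hA i k).mul (hB k j)

end MatrixCalculus

section LinearInParams

variable {m n : Type*}

def IsLinearInParams (M : ℝ → ℝ → ℝ → ℝ → Matrix m n ℝ) : Prop :=
  ∀ b1 b2 b3 c, M b1 b2 b3 c =
    c • M 0 0 0 1 + b1 • M 1 0 0 0 + b2 • M 0 1 0 0 + b3 • M 0 0 1 0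

variable {M : ℝ → ℝ → ℝ → ℝ → Matrix m n ℝ}

theorem IsLinearInParams.add_smul (hM : IsLinearInParams M) (b1 b2 b3 c a1 a2 a3 d t : ℝ) :
    M (b1 + t * a1) (b2 + t * a2) (b3 + t * a3) (c + t * d) =
      M b1 b2 b3 c + t • M a1 a2 a3 d := by
  rw [hM (b1 + _), hM b1, hM a1]
  module

theorem IsLinearInParams.differentiableAt_apply {E : Type*} [NormedAddCommGroup E]
    [NormedSpace ℝ E] (hM : IsLinearInParams M) {f1 f2 f3 : E → ℝ} {x : E}
    (h1 : DifferentiableAt ℝ f1 x) (h2 : DifferentiableAt ℝ f2 x)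
    (h3 : DifferentiableAt ℝ f3 x) (c : ℝ) (i : m) (k : n) :
    DifferentiableAt ℝ (fun z => M (f1 z) (f2 z) (f3 z) c i k) x := by
  simp only [hM _ _ _ c, Matrix.add_apply, Matrix.smul_apply, smul_eq_mul]
  fun_prop

end LinearInParams

theorem isLinearInParams_R1g : IsLinearInParams R1g := by
  intro b1 b2 b3 c
  simp only [R1g, Matrix.smul_of, Matrix.of_add_of, Matrix.smul_cons, Matrix.cons_add_cons,
    Matrix.smul_empty, Matrix.empty_add_empty, smul_eq_mul]
  congr 1
  simp only [Matrix.vecCons_inj]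
  ring_nf
  simp only [and_self]

theorem isLinearInParams_R2g : IsLinearInParams R2g := by
  intro b1 b2 b3 c
  simp only [R2g, Matrix.smul_of, Matrix.of_add_of, Matrix.smul_cons, Matrix.cons_add_cons,
    Matrix.smul_empty, Matrix.empty_add_empty, smul_eq_mul]
  congr 1
  simp only [Matrix.vecCons_inj]
  ring_nf
  simp only [and_self]

theorem isLinearInParams_R3g : IsLinearInParams R3g := by
  intro b1 b2 b3 c
  simp only [R3g, Matrix.smul_of, Matrix.of_add_of, Matrix.smul_cons, Matrix.cons_add_cons,
    Matrix.smul_empty, Matrix.empty_add_empty, smul_eq_mul]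
  congr 1
  simp only [Matrix.vecCons_inj]
  ring_nf
  simp only [and_self]

theorem R1_add_smul (b1 b2 b3 a1 a2 a3 t : ℝ) :
    R1 (b1 + t * a1) (b2 + t * a2) (b3 + t * a3) = R1 b1 b2 b3 + t • U1 a1 a2 a3 := by
  simpa only [R1, U1, mul_zero, add_zero] using
    isLinearInParams_R1g.add_smul b1 b2 b3 1 a1 a2 a3 0 t

theorem R2_add_smul (b1 b2 b3 a1 a2 a3 t : ℝ) :
    R2 (b1 + t * a1) (b2 + t * a2) (b3 + t * a3) = R2 b1 b2 b3 + t • U2 a1 a2 a3 := by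
  simpa only [R2, U2, mul_zero, add_zero] using
    isLinearInParams_R2g.add_smul b1 b2 b3 1 a1 a2 a3 0 t

theorem R3_add_smul (b1 b2 b3 a1 a2 a3 t : ℝ) :
    R3 (b1 + t * a1) (b2 + t * a2) (b3 + t * a3) = R3 b1 b2 b3 + t • U3 a1 a2 a3 := by
  simpa only [R3, U3, mul_zero, add_zero] using
    isLinearInParams_R3g.add_smul b1 b2 b3 1 a1 a2 a3 0 t

theorem differentiableAt_R1_mul_R2_mul_R3_apply {E : Type*} [NormedAddCommGroup E]
    [NormedSpace ℝ E] {f1 f2 f3 : E → ℝ} {x : E} (h1 : DifferentiableAt ℝ f1 x)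
    (h2 : DifferentiableAt ℝ f2 x) (h3 : DifferentiableAt ℝ f3 x) (i : Fin 12) (j : Fin 16) :
    DifferentiableAt ℝ
      (fun z => (R1 (f1 z) (f2 z) (f3 z) * R2 (f1 z) (f2 z) (f3 z) * R3 (f1 z) (f2 z) (f3 z)) i j)
      x :=
  DifferentiableAt.matrix_mul_apply
    (DifferentiableAt.matrix_mul_apply (isLinearInParams_R1g.differentiableAt_apply h1 h2 h3 1)
      (isLinearInParams_R2g.differentiableAt_apply h1 h2 h3 1))
    (isLinearInParams_R3g.differentiableAt_apply h1 h2 h3 1) i j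

theorem U1_mul_R2 {b1 b2 b3 a1 a2 a3 : ℝ} (hb : b1 + b2 + b3 = 1) (ha : a1 + a2 + a3 = 0) :
    U1 a1 a2 a3 * R2 b1 b2 b3 = R1 b1 b2 b3 * U2 a1 a2 a3 := by
  obtain rfl : b3 = 1 - b1 - b2 := by linarith
  obtain rfl : a3 = -a1 - a2 := by linarith
  simp only [U1, U2, R1, R2, R1g, R2g, Matrix.cons_mul, Matrix.cons_vecMul, Matrix.vecHead,
    Matrix.vecTail, Matrix.empty_mul, Matrix.empty_vecMul, Matrix.smul_cons, Matrix.cons_add_cons,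
    Matrix.smul_empty, Matrix.empty_add_empty, Function.comp_apply, Fin.succ_zero_eq_one,
    Matrix.cons_val_zero, Matrix.cons_val_one, Matrix.cons_val_succ, add_zero,
    Equiv.symm_apply_apply, smul_eq_mul, zero_mul, mul_zero]
  congr 1
  simp only [Matrix.vecCons_inj]
  ring_nf
  simp only [and_self]

theorem U2_mul_R3 {b1 b2 b3 a1 a2 a3 : ℝ} (hb : b1 + b2 + b3 = 1) (ha : a1 + a2 + a3 = 0) :
    U2 a1 a2 a3 * R3 b1 b2 b3 = R2 b1 b2 b3 * U3 a1 a2 a3 := by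
  obtain rfl : b3 = 1 - b1 - b2 := by linarith
  obtain rfl : a3 = -a1 - a2 := by linarith
  simp only [U2, U3, R2, R3, R2g, R3g, Matrix.cons_mul, Matrix.cons_vecMul, Matrix.vecHead,
    Matrix.vecTail, Matrix.empty_mul, Matrix.empty_vecMul, Matrix.smul_cons, Matrix.cons_add_cons,
    Matrix.smul_empty, Matrix.empty_add_empty, Function.comp_apply, Fin.succ_zero_eq_one,
    Matrix.cons_val_zero, Matrix.cons_val_one, Matrix.cons_val_succ, add_zero,
    Equiv.symm_apply_apply, smul_eq_mul, zero_mul, mul_zero]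
  congr 1
  simp only [Matrix.vecCons_inj]
  ring_nf
  simp only [and_self]

theorem Matrix.add_add_eq_three_smul {l m n o : Type*} [Fintype m] [Fintype n]
    {A A' : Matrix l m ℝ} {B B' : Matrix m n ℝ} {C C' : Matrix n o ℝ}
    (h1 : A' * B = A * B') (h2 : B' * C = B * C') :
    A' * B * C + A * B' * C + A * B * C' = (3 : ℝ) • (A * B * C') := by
  rw [h1, Matrix.mul_assoc A B' C, h2, ← Matrix.mul_assoc]
  module

/-- differentiation formula, first derivative: with
`F(x) = R1(β(x)) R2(β(x)) R3(β(x))`, the directional derivative of `F` at `x` in a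
direction `u` with directional coordinates `α` is `3 R1(β(x)) R2(β(x)) U3(α)`
(entrywise). -/
theorem differentiation_formula_first
    (p1 p2 p3 : ℝ × ℝ)
    (hind : AffineIndependent ℝ ![p1, p2, p3])
    (bary : ℝ × ℝ → Fin 3 → ℝ)
    (hbary : ∀ z : ℝ × ℝ,
      z = bary z 0 • p1 + bary z 1 • p2 + bary z 2 • p3 ∧
      bary z 0 + bary z 1 + bary z 2 = 1)
    (F : ℝ × ℝ → Matrix (Fin 12) (Fin 16) ℝ)
    (hF : ∀ z, F z = R1 (bary z 0) (bary z 1) (bary z 2) *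
      R2 (bary z 0) (bary z 1) (bary z 2) * R3 (bary z 0) (bary z 1) (bary z 2))
    (x u : ℝ × ℝ) (a1 a2 a3 : ℝ)
    (hu : u = a1 • p1 + a2 • p2 + a3 • p3)
    (ha : a1 + a2 + a3 = 0) :
    ∀ (i : Fin 12) (j : Fin 16),
      fderiv ℝ (fun z => F z i j) x u =
        3 * (R1 (bary x 0) (bary x 1) (bary x 2) *
          R2 (bary x 0) (bary x 1) (bary x 2) * U3 a1 a2 a3) i j := by
  intro i j
  have hcoords : IsBarycentricCoords ![p1, p2, p3] bary := fun z => by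
    simpa [Fin.sum_univ_three, and_comm] using hbary z
  have hdir : u = ∑ k, ![a1, a2, a3] k • ![p1, p2, p3] k := by
    simpa [Fin.sum_univ_three] using hu
  have hline : ∀ t : ℝ, bary (x + t • u) = bary x + t • ![a1, a2, a3] := fun t => by
    rw [hdir]
    exact hcoords.add_smul hind (by simpa [Fin.sum_univ_three] using ha) x t
  have hcurve : ∀ t : ℝ, F (x + t • u) =
      (R1 (bary x 0) (bary x 1) (bary x 2) + t • U1 a1 a2 a3) *
        (R2 (bary x 0) (bary x 1) (bary x 2) + t • U2 a1 a2 a3) *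
        (R3 (bary x 0) (bary x 1) (bary x 2) + t • U3 a1 a2 a3) := fun t => by
    simp [hF, hline, R1_add_smul, R2_add_smul, R3_add_smul]
  have hdiff : DifferentiableAt ℝ (fun z => F z i j) x := by
    have hb := fun k => hcoords.differentiable hind k x
    simp_rw [hF]
    exact differentiableAt_R1_mul_R2_mul_R3_apply (hb 0) (hb 1) (hb 2) i j
  have hderiv := hasDerivAt_add_smul_mul_add_smul_mul_add_smul_apply
    (R1 (bary x 0) (bary x 1) (bary x 2)) (U1 a1 a2 a3) (R2 (bary x 0) (bary x 1) (bary x 2))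
    (U2 a1 a2 a3) (R3 (bary x 0) (bary x 1) (bary x 2)) (U3 a1 a2 a3) i j
  simp_rw [← hcurve] at hderiv
  have hxs : bary x 0 + bary x 1 + bary x 2 = 1 := (hbary x).2
  rw [← hdiff.lineDeriv_eq_fderiv,
    (show HasLineDerivAt ℝ (fun z => F z i j) _ x u from hderiv).lineDeriv,
    Matrix.add_add_eq_three_smul (U1_mul_R2 hxs ha) (U2_mul_R3 hxs ha), Matrix.smul_apply,
    smul_eq_mul]
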